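/- Quadratic runtime of the single-bit-flip non-elitist algorithm on DLB: Let n be an even positive integer. Consider the Markov chain on {0,1}^n whose one-step transition from a state x is: choose i ∈ [1..n] uniformly at random and let y be x with bit i flipped; move to y if either (DLB(x) is even and DLB(y) > DLB(x)) or (DLB(x) is odd and DLB(y) > DLB(x) − 2), and stay at x otherwise. Then, from any initial state, the expected number of steps until the chain first reaches the optimum (1,…,1) is at most n². -/

import Mathlib

/-- Number of leading ones among positions `0, …, n-1` of `x : ℕ → Bool`. -/
def LOn (n : ℕ) (x : ℕ → Bool) : ℕ :=
  ((Finset.range n).filter (fun r => ∀ s ≤ r, x s = true)).card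

/-- The DeceivingLeadingBlocks function (0-based encoding of bit positions):
blocks are `(x (2ℓ), x (2ℓ+1))`; if `x` is not the all-ones string and `m` is the
index of the first non-`11` block, then the value is `2m+1` for a `00` critical
block, `2m` for a `01`/`10` critical block, and `n` for the all-ones string. -/
def DLBn (n : ℕ) (x : ℕ → Bool) : ℕ :=
  if ∀ i < n, x i = true then n
  else if x (2 * (LOn n x / 2)) = false ∧ x (2 * (LOn n x / 2) + 1) = false
    then 2 * (LOn n x / 2) + 1
    else 2 * (LOn n x / 2)

/-- The Honest Leading Blocks function with parameter `δ`:
`HLB_δ(x) = 2m` if `DLB(x) = 2m+1`, `HLB_δ(x) = 2m+2-δ` if `DLB(x) = 2m` (for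
`m ∈ [0..n/2-1]`), and `HLB_δ(x) = n` if `DLB(x) = n`. -/
noncomputable def HLBn (n : ℕ) (δ : ℝ) (x : ℕ → Bool) : ℝ :=
  if ∀ i < n, x i = true then (n : ℝ)
  else if x (2 * (LOn n x / 2)) = false ∧ x (2 * (LOn n x / 2) + 1) = false
    then (2 * (LOn n x / 2) : ℕ)
    else (2 * (LOn n x / 2) : ℕ) + 2 - δ

/-- Extend a bit string `x : Fin n → Bool` to all of `ℕ` (by `false` outside). -/
def toNatFun {n : ℕ} (x : Fin n → Bool) : ℕ → Bool :=
  fun i => if h : i < n then x ⟨i, h⟩ else false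

/-- The LeadingOnes value of a bit string of length `n`. -/
def LO {n : ℕ} (x : Fin n → Bool) : ℕ := LOn n (toNatFun x)

/-- The DeceivingLeadingBlocks value of a bit string of length `n`. -/
def DLB {n : ℕ} (x : Fin n → Bool) : ℕ := DLBn n (toNatFun x)

/-- The Honest Leading Blocks value (parameter `δ`) of a bit string of length `n`. -/
noncomputable def HLB {n : ℕ} (δ : ℝ) (x : Fin n → Bool) : ℝ := HLBn n δ (toNatFun x)

/-- One step of the single-bit-flip non-elitist algorithm on `DLB`, started at
`x`: choose a position `i` uniformly at random and let `y` be `x` with bit `i`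
flipped; move to `y` if either `DLB x` is even and `DLB y > DLB x`, or `DLB x`
is odd and `DLB y > DLB x - 2`; stay at `x` otherwise. -/
noncomputable def sbfStep (n : ℕ) [NeZero n] (x : Fin n → Bool) :
    PMF (Fin n → Bool) :=
  (PMF.uniformOfFintype (Fin n)).map fun i =>
    if (Even (DLB x) ∧ DLB x < DLB (Function.update x i (!(x i)))) ∨
        (¬ Even (DLB x) ∧
          (DLB x : ℤ) - 2 < (DLB (Function.update x i (!(x i))) : ℤ))
      then Function.update x i (!(x i)) else x

/-- `t`-fold iteration of a Markov transition rule `step`, started at `x`. -/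
noncomputable def iterStep {S : Type*} (step : S → PMF S) : ℕ → S → PMF S
  | 0, x => PMF.pure x
  | t + 1, x => (iterStep step t x).bind step

/-!
The potential `Φ(x) = 2n (n - HLB_{3/2}(x))` lies in `[0, 2n²]`, vanishes at the optimum, and
away from it drops by at least `2` in expectation in each step: a flip outside the critical
block is rejected or leaves `DLB` unchanged, while the two flips inside it change `Φ` by at most
`-3n` and exactly `+n` on a `01`/`10` block, and by `-n` each on a `00` block. By additive drift
the expected hitting time is then at most `2n² / 2 = n²`.
-/

open scoped ENNReal

namespace PMF

variable {S T : Type*}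

theorem tsum_pure_mul (a : S) (Φ : S → ℝ≥0∞) : ∑' y, PMF.pure a y * Φ y = Φ a := by
  simp [PMF.pure_apply]

theorem tsum_map_mul (p : PMF S) (f : S → T) (Φ : T → ℝ≥0∞) :
    ∑' y, p.map f y * Φ y = ∑' x, p x * Φ (f x) := by
  classical
  simp_rw [PMF.map_apply, ← ENNReal.tsum_mul_right, ite_mul, zero_mul]
  rw [ENNReal.tsum_comm]
  congr 1 with x
  exact tsum_ite_eq (f x) (fun y => p x * Φ y)

theorem tsum_bind_mul (p : PMF S) (f : S → PMF T) (Φ : T → ℝ≥0∞) :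
    ∑' y, p.bind f y * Φ y = ∑' x, p x * ∑' y, f x y * Φ y := by
  simp_rw [PMF.bind_apply, ← ENNReal.tsum_mul_right, ← ENNReal.tsum_mul_left, mul_assoc]
  exact ENNReal.tsum_comm

theorem one_sub_apply_eq_tsum [DecidableEq S] (p : PMF S) (a : S) :
    1 - p a = ∑' x, if x = a then 0 else p x := by
  rw [← p.tsum_coe, ENNReal.summable.tsum_eq_add_tsum_ite' a,
    ENNReal.add_sub_cancel_left (p.apply_ne_top a)]

end PMF

section AdditiveDrift

variable {S : Type*} [DecidableEq S] {step : S → PMF S} {Φ : S → ℝ≥0∞} {a : S}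
  {c : ℝ≥0∞}

theorem tsum_bind_mul_add_le
    (hdrift : ∀ x, ∑' y, step x y * Φ y + (if x = a then 0 else c) ≤ Φ x)
    (p : PMF S) :
    ∑' y, p.bind step y * Φ y + c * (1 - p a) ≤ ∑' x, p x * Φ x := by
  have hmiss : c * (1 - p a) = ∑' x, p x * (if x = a then 0 else c) := by
    rw [p.one_sub_apply_eq_tsum, ← ENNReal.tsum_mul_left]
    congr 1 with x
    split_ifs <;> simp [mul_comm]
  rw [p.tsum_bind_mul, hmiss, ← ENNReal.tsum_add]
  exact ENNReal.tsum_le_tsum fun x => by rw [← mul_add]; exact mul_le_mul_right (hdrift x) _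

theorem tsum_iterStep_mul_add_le
    (hdrift : ∀ x, ∑' y, step x y * Φ y + (if x = a then 0 else c) ≤ Φ x)
    (x₀ : S) (N : ℕ) :
    ∑' y, iterStep step N x₀ y * Φ y
        + c * ∑ t ∈ Finset.range N, (1 - iterStep step t x₀ a)
      ≤ Φ x₀ := by
  induction N with
  | zero => simp [iterStep]
  | succ N ih =>
    calc _ = ∑' y, (iterStep step N x₀).bind step y * Φ y + c * (1 - iterStep step N x₀ a)
          + c * ∑ t ∈ Finset.range N, (1 - iterStep step t x₀ a) := by
          rw [Finset.sum_range_succ, mul_add, ← add_assoc, iterStep]; ring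
      _ ≤ _ := (add_le_add_left (tsum_bind_mul_add_le hdrift _) _).trans ih

theorem mul_tsum_one_sub_iterStep_le
    (hdrift : ∀ x, ∑' y, step x y * Φ y + (if x = a then 0 else c) ≤ Φ x)
    (x₀ : S) :
    c * ∑' t, (1 - iterStep step t x₀ a) ≤ Φ x₀ := by
  rw [ENNReal.tsum_eq_iSup_nat, ENNReal.mul_iSup]
  exact iSup_le fun N => le_add_self.trans (tsum_iterStep_mul_add_le hdrift x₀ N)

end AdditiveDrift

theorem Finset.sum_add_two_nsmul_eq_of_eq_off_pair {ι M : Type*} [AddCommMonoid M]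
    [DecidableEq ι] {s : Finset ι} {f : ι → M} {a b : ι} {c : M} (ha : a ∈ s) (hb : b ∈ s)
    (hab : a ≠ b) (hf : ∀ i ∈ s, i ≠ a → i ≠ b → f i = c) :
    ∑ i ∈ s, f i + 2 • c = s.card • c + f a + f b := by
  have hb' : b ∈ s.erase a := Finset.mem_erase.2 ⟨hab.symm, hb⟩
  have hrest : ∑ i ∈ (s.erase a).erase b, f i = ∑ i ∈ (s.erase a).erase b, c :=
    Finset.sum_congr rfl fun i hi => by
      obtain ⟨hib, hia, his⟩ : i ≠ b ∧ i ≠ a ∧ i ∈ s := by simpa using hi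
      exact hf i his hia hib
  rw [← Finset.sum_const, ← Finset.add_sum_erase s f ha, ← Finset.add_sum_erase _ f hb',
    ← Finset.add_sum_erase s _ ha, ← Finset.add_sum_erase _ _ hb', hrest, two_nsmul]
  abel

section DeceivingLeadingBlocks

variable {n : ℕ} {x : ℕ → Bool}

theorem LOn_eq_of {L : ℕ} (hL : L ≤ n) (hones : ∀ s < L, x s = true)
    (hzero : L < n → x L = false) : LOn n x = L := by
  rw [LOn, ← Finset.card_range L]
  congr 1
  ext r
  simp only [Finset.mem_filter, Finset.mem_range]
  constructor
  · rintro ⟨hr, hpre⟩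
    by_contra! hLr
    simpa [hzero (hLr.trans_lt hr)] using hpre L hLr
  · intro hr
    exact ⟨hr.trans_le hL, fun s hs => hones s (hs.trans_lt hr)⟩

structure IsCriticalBlock (n : ℕ) (x : ℕ → Bool) (m : ℕ) : Prop where
  le : 2 * m + 2 ≤ n
  ones : ∀ s < 2 * m, x s = true
  not_ones : ¬ (x (2 * m) = true ∧ x (2 * m + 1) = true)

theorem exists_isCriticalBlock (hn : Even n) (hx : ¬ ∀ i < n, x i = true) :
    ∃ m, IsCriticalBlock n x m := by
  classical
  have h : ∃ s, s < n ∧ x s = false := by simpa using hx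
  set L := Nat.find h
  obtain ⟨hlt, hzero⟩ : L < n ∧ x L = false := Nat.find_spec h
  have hones : ∀ s < L, x s = true := fun s hs => by
    simpa [hs.trans hlt] using Nat.find_min h hs
  obtain ⟨k, rfl⟩ := hn
  refine ⟨L / 2, by omega, fun s hs => hones s (by omega), fun ⟨h0, h1⟩ => ?_⟩
  rcases (by omega : 2 * (L / 2) = L ∨ 2 * (L / 2) + 1 = L) with hL | hL
  · simp [hL, hzero] at h0
  · simp [hL, hzero] at h1

theorem IsCriticalBlock.DLBn_eq {m : ℕ} (h : IsCriticalBlock n x m) :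
    DLBn n x = if x (2 * m) = false ∧ x (2 * m + 1) = false then 2 * m + 1 else 2 * m := by
  have hm := h.le
  have hLO : LOn n x / 2 = m := by
    cases h0 : x (2 * m)
    · rw [LOn_eq_of (by omega) h.ones fun _ => h0]
      omega
    · have h1 : x (2 * m + 1) = false := by simpa [h0] using h.not_ones
      have hones : ∀ s < 2 * m + 1, x s = true := fun s hs => by
        rcases Nat.lt_succ_iff_lt_or_eq.1 hs with hs | rfl
        exacts [h.ones s hs, h0]
      rw [LOn_eq_of (by omega) hones fun _ => h1]
      omega
  have hx : ¬ ∀ i < n, x i = true := fun hall =>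
    h.not_ones ⟨hall _ (by omega), hall _ (by omega)⟩
  rw [DLBn, if_neg hx, hLO]

theorem IsCriticalBlock.DLBn_div_two {m : ℕ} (h : IsCriticalBlock n x m) : DLBn n x / 2 = m := by
  rw [h.DLBn_eq]
  split_ifs <;> omega

theorem IsCriticalBlock.update {m j : ℕ} (h : IsCriticalBlock n x m) (hj : 2 * m ≤ j) (b : Bool)
    (hblock : ¬ (Function.update x j b (2 * m) = true ∧
      Function.update x j b (2 * m + 1) = true)) :
    IsCriticalBlock n (Function.update x j b) m :=
  ⟨h.le, fun s hs => by rw [Function.update_of_ne (by omega)]; exact h.ones s hs, hblock⟩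

theorem IsCriticalBlock.DLBn_update_of_le {m j : ℕ} (h : IsCriticalBlock n x m)
    (hj : 2 * m + 2 ≤ j) (b : Bool) : DLBn n (Function.update x j b) = DLBn n x := by
  have h0 : Function.update x j b (2 * m) = x (2 * m) := Function.update_of_ne (by omega) _ _
  have h1 : Function.update x j b (2 * m + 1) = x (2 * m + 1) :=
    Function.update_of_ne (by omega) _ _
  rw [(h.update (by omega) b (h0 ▸ h1 ▸ h.not_ones)).DLBn_eq, h.DLBn_eq, h0, h1]

theorem IsCriticalBlock.DLBn_update_false_lt {m j : ℕ} (h : IsCriticalBlock n x m)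
    (hj : j < 2 * m) : DLBn n (Function.update x j false) < 2 * m := by
  have hm := h.le
  have hc : IsCriticalBlock n (Function.update x j false) (j / 2) := by
    refine ⟨by omega, fun s hs => ?_, fun ⟨h0, h1⟩ => ?_⟩
    · rw [Function.update_of_ne (by omega)]
      exact h.ones s (by omega)
    · rcases (by omega : 2 * (j / 2) = j ∨ 2 * (j / 2) + 1 = j) with hj' | hj'
      · simp [hj'] at h0
      · simp [hj'] at h1
  rw [hc.DLBn_eq]
  split_ifs <;> omega

theorem two_mul_le_DLBn (hn : Even n) {k : ℕ} (hk : 2 * k ≤ n)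
    (hones : ∀ s < 2 * k, x s = true) : 2 * k ≤ DLBn n x := by
  by_cases hall : ∀ i < n, x i = true
  · rwa [DLBn, if_pos hall]
  · obtain ⟨m, hm⟩ := exists_isCriticalBlock hn hall
    have hkm : k ≤ m := by
      by_contra! hmk
      exact hm.not_ones ⟨hones _ (by omega), hones _ (by omega)⟩
    rw [hm.DLBn_eq]
    split_ifs <;> omega

end DeceivingLeadingBlocks

/-- The acceptance rule of `sbfStep`, read off on DLB values: the value after the step when a
state of value `d` proposes one of value `d'`. -/
def acceptedDLB (d d' : ℕ) : ℕ :=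
  if (Even d ∧ d < d') ∨ (¬ Even d ∧ (d : ℤ) - 2 < (d' : ℤ)) then d' else d

section AcceptedDLB

variable {d d' : ℕ}

theorem acceptedDLB_of_lt (h : d' < 2 * (d / 2)) : acceptedDLB d d' = d := by
  rw [acceptedDLB, if_neg]
  rintro (⟨-, hlt⟩ | ⟨hodd, hlt⟩)
  · omega
  · rw [Nat.not_even_iff] at hodd
    omega

theorem acceptedDLB_self (d : ℕ) : acceptedDLB d d = d := by
  rw [acceptedDLB]
  split_ifs <;> rfl

theorem acceptedDLB_of_even (hd : Even d) (h : d < d') : acceptedDLB d d' = d' :=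
  if_pos (Or.inl ⟨hd, h⟩)

theorem acceptedDLB_of_odd (hd : ¬ Even d) (h : d < d' + 2) : acceptedDLB d d' = d' :=
  if_pos (Or.inr ⟨hd, by omega⟩)

end AcceptedDLB

/-- `2 (n - HLB_{3/2})` as a function of `d = DLB`. -/
def dlbPotential (n d : ℕ) : ℕ :=
  if n ≤ d then 0 else if Even d then 2 * (n - d) - 1 else 2 * (n - d) + 2

section DLBPotential

variable {n m d : ℕ}

theorem dlbPotential_le : dlbPotential n d ≤ 2 * n := by
  rw [dlbPotential]
  split_ifs with h1 h2
  · omega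
  · omega
  · rw [Nat.not_even_iff] at *
    omega

theorem dlbPotential_two_mul_add_one (h : 2 * m + 2 ≤ n) :
    dlbPotential n (2 * m + 1) = dlbPotential n (2 * m) + 1 := by
  simp only [dlbPotential]
  rw [if_neg (show ¬ n ≤ 2 * m + 1 by omega), if_neg (show ¬ n ≤ 2 * m by omega),
    if_neg (Nat.not_even_iff_odd.2 (odd_two_mul_add_one m)), if_pos (even_two_mul m)]
  omega

theorem dlbPotential_add_three_le (h : 2 * m + 2 ≤ n) (hd : 2 * m + 2 ≤ d) :
    dlbPotential n d + 3 ≤ dlbPotential n (2 * m) := by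
  simp only [dlbPotential]
  rw [if_neg (show ¬ n ≤ 2 * m by omega), if_pos (even_two_mul m)]
  split_ifs with hnd hev
  · omega
  · omega
  · rw [Nat.not_even_iff] at hev
    omega

end DLBPotential

section Flips

variable {n m : ℕ} {x : ℕ → Bool}

theorem IsCriticalBlock.dlbPotential_flip_mixed_block (hn : Even n) (h : IsCriticalBlock n x m)
    {a b : ℕ} (hab : a = 2 * m ∧ b = 2 * m + 1 ∨ a = 2 * m + 1 ∧ b = 2 * m)
    (ha : x a = false) (hb : x b = true) :
    dlbPotential n (acceptedDLB (DLBn n x) (DLBn n (Function.update x a true)))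
      + dlbPotential n (acceptedDLB (DLBn n x) (DLBn n (Function.update x b false))) + 2
      ≤ 2 * dlbPotential n (DLBn n x) := by
  have hm := h.le
  have hd : DLBn n x = 2 * m := by
    rw [h.DLBn_eq, if_neg]
    rintro ⟨h0, h1⟩
    rcases hab with ⟨rfl, rfl⟩ | ⟨rfl, rfl⟩ <;> simp_all
  have hup : 2 * m + 2 ≤ DLBn n (Function.update x a true) := by
    refine two_mul_le_DLBn hn (k := m + 1) (by omega) fun s hs => ?_
    rcases (by omega : s < 2 * m ∨ s = a ∨ s = b) with hs | rfl | rfl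
    · rw [Function.update_of_ne (by omega)]
      exact h.ones s hs
    · exact Function.update_self ..
    · rw [Function.update_of_ne (by omega)]
      exact hb
  have hzero : ∀ s, 2 * m ≤ s → s ≤ 2 * m + 1 → Function.update x b false s = false := by
    intro s hs1 hs2
    rcases (by omega : s = a ∨ s = b) with rfl | rfl
    · rw [Function.update_of_ne (by omega)]
      exact ha
    · exact Function.update_self ..
  have hzero₀ := hzero (2 * m) le_rfl (by omega)
  have hzero₁ := hzero (2 * m + 1) (by omega) le_rfl
  have hdown : DLBn n (Function.update x b false) = 2 * m + 1 := by
    rw [(h.update (by omega) false (by simp [hzero₀])).DLBn_eq, if_pos ⟨hzero₀, hzero₁⟩]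
  rw [hd, acceptedDLB_of_even (even_two_mul m) (by omega),
    acceptedDLB_of_even (even_two_mul m) (by omega), hdown, dlbPotential_two_mul_add_one hm]
  have := dlbPotential_add_three_le hm hup
  omega

theorem IsCriticalBlock.dlbPotential_flip_zero_block (h : IsCriticalBlock n x m)
    (h0 : x (2 * m) = false) (h1 : x (2 * m + 1) = false) {j : ℕ} (hj : 2 * m ≤ j)
    (hj' : j ≤ 2 * m + 1) :
    dlbPotential n (acceptedDLB (DLBn n x) (DLBn n (Function.update x j true))) + 1
      = dlbPotential n (DLBn n x) := by
  have hd : DLBn n x = 2 * m + 1 := by rw [h.DLBn_eq, if_pos ⟨h0, h1⟩]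
  have hmixed : ¬ (Function.update x j true (2 * m) = true ∧
        Function.update x j true (2 * m + 1) = true) ∧
      ¬ (Function.update x j true (2 * m) = false ∧
        Function.update x j true (2 * m + 1) = false) := by
    rcases (by omega : j = 2 * m ∨ j = 2 * m + 1) with rfl | rfl <;>
      simp [h0, h1]
  rw [hd, (h.update hj true hmixed.1).DLBn_eq, if_neg hmixed.2,
    acceptedDLB_of_odd (Nat.not_even_iff_odd.2 (odd_two_mul_add_one m)) (by omega),
    dlbPotential_two_mul_add_one h.le]

theorem IsCriticalBlock.dlbPotential_flip_block (hn : Even n) (h : IsCriticalBlock n x m) :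
    dlbPotential n (acceptedDLB (DLBn n x) (DLBn n (Function.update x (2 * m) (!x (2 * m)))))
      + dlbPotential n (acceptedDLB (DLBn n x)
          (DLBn n (Function.update x (2 * m + 1) (!x (2 * m + 1))))) + 2
      ≤ 2 * dlbPotential n (DLBn n x) := by
  cases h0 : x (2 * m) <;> cases h1 : x (2 * m + 1) <;> simp only [Bool.not_false, Bool.not_true]
  · have e₀ := h.dlbPotential_flip_zero_block h0 h1 le_rfl (by omega)
    have e₁ := h.dlbPotential_flip_zero_block h0 h1 (by omega) le_rfl
    omega
  · exact h.dlbPotential_flip_mixed_block hn (Or.inl ⟨rfl, rfl⟩) h0 h1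
  · rw [add_comm (dlbPotential n _)]
    exact h.dlbPotential_flip_mixed_block hn (Or.inr ⟨rfl, rfl⟩) h1 h0
  · exact absurd ⟨h0, h1⟩ h.not_ones

theorem sum_dlbPotential_acceptedDLB_add_two_le (hn : Even n) (hx : ¬ ∀ i < n, x i = true) :
    ∑ i : Fin n, dlbPotential n (acceptedDLB (DLBn n x) (DLBn n (Function.update x i (!x i))))
        + 2
      ≤ n * dlbPotential n (DLBn n x) := by
  obtain ⟨m, hm⟩ := exists_isCriticalBlock hn hx
  have hmn := hm.le
  have hrest : ∀ i ∈ Finset.univ, i ≠ (⟨2 * m, by omega⟩ : Fin n) →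
      i ≠ ⟨2 * m + 1, by omega⟩ →
      dlbPotential n (acceptedDLB (DLBn n x) (DLBn n (Function.update x i (!x i))))
        = dlbPotential n (DLBn n x) := by
    intro i _ hi₀ hi₁
    simp only [Ne, Fin.ext_iff] at hi₀ hi₁
    rcases (by omega : (i : ℕ) < 2 * m ∨ 2 * m + 2 ≤ i) with hi | hi
    · rw [hm.ones i hi, Bool.not_true,
        acceptedDLB_of_lt (hm.DLBn_div_two ▸ hm.DLBn_update_false_lt hi)]
    · rw [hm.DLBn_update_of_le hi, acceptedDLB_self]
  have hsum := Finset.sum_add_two_nsmul_eq_of_eq_off_pair (Finset.mem_univ _)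
    (Finset.mem_univ _) (by simp [Fin.ext_iff]) hrest
  have hblock := hm.dlbPotential_flip_block hn
  simp only [smul_eq_mul, Finset.card_univ, Fintype.card_fin] at hsum
  omega

end Flips

section BitStrings

variable {n : ℕ}

theorem toNatFun_apply_fin (z : Fin n → Bool) (i : Fin n) : toNatFun z i = z i := by
  simp [toNatFun]

theorem toNatFun_update (z : Fin n → Bool) (i : Fin n) (b : Bool) :
    toNatFun (Function.update z i b) = Function.update (toNatFun z) i b := by
  ext j
  by_cases hj : j < n
  · by_cases hji : j = i
    · subst hji
      simp [toNatFun]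
    · rw [Function.update_of_ne hji]
      simp [toNatFun, hj, Fin.ext_iff, hji]
  · rw [Function.update_of_ne (by omega)]
    simp [toNatFun, hj]

theorem forall_toNatFun_eq_true_iff (z : Fin n → Bool) :
    (∀ i < n, toNatFun z i = true) ↔ z = fun _ => true := by
  simp +contextual [funext_iff, toNatFun, Fin.forall_iff]

theorem DLB_update_not (z : Fin n → Bool) (i : Fin n) :
    DLB (Function.update z i (!z i)) =
      DLBn n (Function.update (toNatFun z) i (!toNatFun z i)) := by
  rw [DLB, toNatFun_update, toNatFun_apply_fin]

theorem tsum_sbfStep_mul_dlbPotential_add_two_le [NeZero n] (hn : Even n) (z : Fin n → Bool)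
    (hz : z ≠ fun _ => true) :
    ∑' y, sbfStep n z y * (n * dlbPotential n (DLB y) : ℝ≥0∞) + 2
      ≤ n * dlbPotential n (DLB z) := by
  have hsum := sum_dlbPotential_acceptedDLB_add_two_le hn (x := toNatFun z)
    (by rwa [forall_toNatFun_eq_true_iff])
  rw [sbfStep, PMF.tsum_map_mul, tsum_fintype]
  simp only [PMF.uniformOfFintype_apply, Fintype.card_fin, ← mul_assoc,
    ENNReal.inv_mul_cancel (Nat.cast_ne_zero.2 (NeZero.ne n)) (ENNReal.natCast_ne_top n), one_mul,
    apply_ite DLB, DLB_update_not]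
  exact_mod_cast hsum

end BitStrings

/-- The expected hitting time is expressed as `Σ_{t≥0} Pr[T > t]`, using the chain absorbed at
the optimum (which has the same first hitting time): `Pr[T > t]` is the probability that the
absorbed chain is not at the optimum at time `t`. -/
theorem single_bit_flip_runtime_on_DLB (n : ℕ) [NeZero n] (he : Even n)
    (x0 : Fin n → Bool) :
    ∑' t : ℕ,
        (1 - iterStep
          (fun x => if x = (fun _ => true) then PMF.pure x else sbfStep n x)
          t x0 (fun _ => true))
      ≤ ((n : ENNReal)) ^ 2 := by
  have hdrift : ∀ z, ∑' y, (if z = (fun _ => true) then PMF.pure z else sbfStep n z) y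
      * (n * dlbPotential n (DLB y) : ℝ≥0∞) + (if z = (fun _ => true) then 0 else 2)
      ≤ n * dlbPotential n (DLB z) := by
    intro z
    split_ifs with hz
    · rw [PMF.tsum_pure_mul, add_zero]
    · exact tsum_sbfStep_mul_dlbPotential_add_two_le he z hz
  have hpot : (n * dlbPotential n (DLB x0) : ℝ≥0∞) ≤ 2 * n ^ 2 := by
    have : n * dlbPotential n (DLB x0) ≤ 2 * n ^ 2 := by
      nlinarith [dlbPotential_le (n := n) (d := DLB x0)]
    exact_mod_cast this
  exact (ENNReal.mul_le_mul_iff_right two_ne_zero ENNReal.ofNat_ne_top).1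
    ((mul_tsum_one_sub_iterStep_le hdrift x0).trans hpot)
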